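/- L¹ bound for the derivative of the Hermite-type reconstruction (Lemma 4.5, eq. (4.12b)): the Hermite-type reconstruction W satisfies ∫_a^b ‖V'(t) − W'(t)‖_H dt ≤ (1/2)·(‖j_a‖_H + ‖j_b‖_H). -/

import Mathlib

open scoped RealInnerProductSpace
open MeasureTheory

/-- First cubic Hermite basis function on `[a, b]`:
`φ₁(t) = 2((t-a)/(b-a))³ - 3((t-a)/(b-a))² + 1`. -/
noncomputable def hermite1 (a b t : ℝ) : ℝ :=
  2 * ((t - a) / (b - a)) ^ 3 - 3 * ((t - a) / (b - a)) ^ 2 + 1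

/-- Second cubic Hermite basis function on `[a, b]`:
`φ₂(t) = -2((t-a)/(b-a))³ + 3((t-a)/(b-a))²`. -/
noncomputable def hermite2 (a b t : ℝ) : ℝ :=
  -2 * ((t - a) / (b - a)) ^ 3 + 3 * ((t - a) / (b - a)) ^ 2

/-- Evaluation of the `H`-valued polynomial with coefficients `c` (degree at most `k`):
`t ↦ ∑_{i=0}^{k} tⁱ • c i`. -/
noncomputable def polyEval {H : Type*} [NormedAddCommGroup H] [NormedSpace ℝ H]
    (k : ℕ) (c : ℕ → H) (t : ℝ) : H :=
  ∑ i ∈ Finset.range (k + 1), t ^ i • c i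

/-- Coefficients of the termwise derivative of the polynomial with coefficients `c`. -/
noncomputable def dC {H : Type*} [NormedAddCommGroup H] [NormedSpace ℝ H]
    (c : ℕ → H) : ℕ → H := fun i => ((i : ℝ) + 1) • c (i + 1)

/-- The Hermite-type reconstruction on `[a, b]` of the polynomial with coefficients `c`
with jumps `ja` (at `a`) and `jb` (at `b`): `W = V - (ja/2)·φ₁ + (jb/2)·φ₂`. -/
noncomputable def hermRecon {H : Type*} [NormedAddCommGroup H] [NormedSpace ℝ H]
    (k : ℕ) (c : ℕ → H) (ja jb : H) (a b : ℝ) (t : ℝ) : H :=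
  polyEval k c t - (hermite1 a b t / 2) • ja + (hermite2 a b t / 2) • jb

private lemma hasDerivAt_hermite1 (a b t : ℝ) (hab : b - a ≠ 0) :
    HasDerivAt (hermite1 a b)
      ((6*((t-a)/(b-a))^2 - 6*((t-a)/(b-a))) / (b-a)) t := by
  have hu : HasDerivAt (fun t => (t-a)/(b-a)) (1/(b-a)) t := by
    simpa using ((hasDerivAt_id t).sub_const a).div_const (b-a)
  have h := (((hu.pow 3).const_mul 2).sub ((hu.pow 2).const_mul 3)).add_const 1
  exact h.congr_deriv (by ring)

private lemma hermite2_eq (a b : ℝ) : hermite2 a b = fun t => 1 - hermite1 a b t := by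
  funext t; simp [hermite1, hermite2]; ring

private lemma hasDerivAt_polyEval {H : Type*} [NormedAddCommGroup H] [NormedSpace ℝ H]
    (k : ℕ) (c : ℕ → H) (hc : c (k+1) = 0) (t : ℝ) :
    HasDerivAt (polyEval k c) (polyEval k (dC c) t) t := by
  have h : HasDerivAt (polyEval k c)
      (∑ i ∈ Finset.range (k+1), ((i:ℝ) * t^(i-1)) • c i) t := by
    apply HasDerivAt.fun_sum
    intro i _
    exact (hasDerivAt_pow i t).smul_const (c i)
  convert h using 1
  rw [polyEval, Finset.sum_range_succ, Finset.sum_range_succ']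
  simp only [dC, hc, smul_zero, smul_smul, Nat.cast_zero, pow_zero, zero_mul, zero_smul,
    add_zero, Nat.cast_succ]
  apply Finset.sum_congr rfl
  intro i _
  congr 1
  push_cast; ring_nf

/-- L¹ bound for the derivative of the Hermite-type reconstruction (Lemma 4.5, eq. (4.12b)):
`∫_a^b ‖V' - W'‖ ≤ (1/2)(‖j_a‖ + ‖j_b‖)`. -/
theorem hermite_reconstruction_deriv_L1_bound
    {H : Type*} [NormedAddCommGroup H] [NormedSpace ℝ H]
    (a b : ℝ) (hab : a < b) (k : ℕ) (c : ℕ → H) (hc : ∀ i, k < i → c i = 0)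
    (A B : H) :
    (∫ t in a..b,
        ‖polyEval k (dC c) t
          - deriv (hermRecon k c (polyEval k c a - A) (B - polyEval k c b) a b) t‖)
      ≤ 1 / 2 * (‖polyEval k c a - A‖ + ‖B - polyEval k c b‖) := by
  set ja := polyEval k c a - A with hja
  set jb := B - polyEval k c b with hjb
  have hba : b - a ≠ 0 := sub_ne_zero.2 hab.ne'
  set d : ℝ → ℝ := fun t => (6*((t-a)/(b-a))^2 - 6*((t-a)/(b-a))) / (b-a) with hd
  have hck : c (k+1) = 0 := hc _ (Nat.lt_succ_self k)
  -- derivative of W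
  have hW : ∀ t, deriv (hermRecon k c ja jb a b) t
      = polyEval k (dC c) t - (d t / 2) • ja + ((-d t) / 2) • jb := by
    intro t
    have h1 := hasDerivAt_hermite1 a b t hba
    have h2 : HasDerivAt (hermite2 a b) (-(d t)) t := by
      rw [hermite2_eq]
      simpa using h1.const_sub 1
    have hV := hasDerivAt_polyEval k c hck t
    have : HasDerivAt (hermRecon k c ja jb a b)
        (polyEval k (dC c) t - (d t / 2) • ja + ((-d t) / 2) • jb) t := by
      exact ((hV.sub ((h1.div_const 2).smul_const ja)).add
        ((h2.div_const 2).smul_const jb))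
    exact this.deriv
  -- integrand simplification
  have hint : ∀ t, polyEval k (dC c) t - deriv (hermRecon k c ja jb a b) t
      = (d t / 2) • (ja + jb) := by
    intro t
    have key : ∀ (V x y : H), V - (V - x + y) = x - y := fun V x y => by abel
    rw [hW t, key, smul_add, neg_div, neg_smul, sub_neg_eq_add]
  have hdcont : Continuous d := by
    apply Continuous.div_const
    fun_prop
  -- integral computation
  have hnonpos : ∀ t ∈ Set.Icc a b, d t ≤ 0 := by
    intro t ht
    have hu0 : 0 ≤ (t-a)/(b-a) := div_nonneg (by linarith [ht.1]) (by linarith)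
    have hu1 : (t-a)/(b-a) ≤ 1 := by
      rw [div_le_one (by linarith)]; linarith [ht.2]
    apply div_nonpos_of_nonpos_of_nonneg _ (by linarith)
    nlinarith
  have habd : ∫ t in a..b, d t = -1 := by
    have : ∫ t in a..b, d t = hermite1 a b b - hermite1 a b a :=
      intervalIntegral.integral_eq_sub_of_hasDerivAt
        (fun t _ => hasDerivAt_hermite1 a b t hba)
        (hdcont.intervalIntegrable a b)
    rw [this]
    simp [hermite1, div_self hba]
    norm_num
  calc (∫ t in a..b, ‖polyEval k (dC c) t - deriv (hermRecon k c ja jb a b) t‖)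
      = ∫ t in a..b, |d t / 2| * ‖ja + jb‖ := by
        simp_rw [hint, norm_smul, Real.norm_eq_abs]
    _ = (∫ t in a..b, |d t / 2|) * ‖ja + jb‖ := by
        rw [intervalIntegral.integral_mul_const]
    _ = (1/2) * ‖ja + jb‖ := by
        congr 1
        have : ∫ t in a..b, |d t / 2| = ∫ t in a..b, -(d t) / 2 := by
          apply intervalIntegral.integral_congr
          intro t ht
          rw [Set.uIcc_of_le hab.le] at ht
          show |d t / 2| = -d t / 2
          rw [abs_div, abs_of_nonpos (hnonpos t ht)]
          norm_num
        rw [this]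
        simp_rw [neg_div]
        rw [intervalIntegral.integral_neg, intervalIntegral.integral_div, habd]
        norm_num
    _ ≤ 1/2 * (‖ja‖ + ‖jb‖) := by
        have := norm_add_le ja jb
        nlinarith [norm_nonneg ja, norm_nonneg jb]
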